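/- Let Φ = φ_1 ∧ ⋯ ∧ φ_m be an extremal instance over a product distribution D with dependency graph Γ, and set p_k = Pr_D(¬φ_k), p_S = ∏_{k∈S} p_k. For S ⊆ [m] define q_S = Σ_{I ∈ I(Γ), I ⊇ S} (−1)^{|I \setminus S|} p_I. Then for every S ⊆ [m], q_S equals the probability under D that exactly the clauses in S are false, i.e., Pr_D( ∧_{k∈S} ¬φ_k ∧ ∧_{k∈[m]\setminus S} φ_k ). -/

import Mathlib

open Finset in
lemma total_mass {ι : Type*} [Fintype ι] [DecidableEq ι] (β : ι → Type*) [∀ i, Fintype (β i)]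
    (w : ∀ i, β i → ℝ) (hw1 : ∀ i, ∑ a, w i a = 1) :
    ∑ x : ∀ i, β i, ∏ i, w i (x i) = 1 := by
  have h := Finset.prod_univ_sum (fun i => (univ : Finset (β i))) (fun i a => w i a)
  rw [Fintype.piFinset_univ] at h
  rw [← h]
  simp [hw1]

set_option maxHeartbeats 1000000 in
open Finset in
lemma split_lemma {ι : Type*} [Fintype ι] [DecidableEq ι] (β : ι → Type*) [∀ i, Fintype (β i)]
    (w : ∀ i, β i → ℝ) (hw1 : ∀ i, ∑ a, w i a = 1) (T : Finset ι)
    (F G : (∀ i, β i) → ℝ)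
    (hF : ∀ x y, (∀ i ∈ T, x i = y i) → F x = F y)
    (hG : ∀ x y, (∀ i, i ∉ T → x i = y i) → G x = G y) :
    (∑ x : ∀ i, β i, F x * G x * ∏ i, w i (x i))
      = (∑ x : ∀ i, β i, F x * ∏ i, w i (x i)) * (∑ x : ∀ i, β i, G x * ∏ i, w i (x i)) := by
  have hne : ∀ i, Nonempty (β i) := by
    intro i
    by_contra h
    have : IsEmpty (β i) := not_nonempty_iff.mp h
    have := hw1 i
    simp at this
  let e := (Equiv.piEquivPiSubtypeProd (fun i => i ∈ T) β).symm
  -- reindex sums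
  have hsum : ∀ h : (∀ i, β i) → ℝ, (∑ x : ∀ i, β i, h x)
      = ∑ u : ∀ i : {i // i ∈ T}, β i, ∑ v : ∀ i : {i // i ∉ T}, β i, h (e (u, v)) := by
    intro h
    rw [← Equiv.sum_comp e h, Fintype.sum_prod_type]
  have happ : ∀ u v (i : ι), e (u, v) i = if h : i ∈ T then u ⟨i, h⟩ else v ⟨i, h⟩ := by
    intro u v i
    simp [e, Equiv.piEquivPiSubtypeProd_symm_apply]
  -- weight splits
  have hw : ∀ u v, (∏ i, w i (e (u, v) i))
      = (∏ i : {i // i ∈ T}, w i (u i)) * (∏ i : {i // i ∉ T}, w i (v i)) := by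
    intro u v
    rw [← Finset.prod_mul_prod_compl T]
    congr 1
    · rw [Finset.prod_subtype T (fun i => Iff.rfl) (fun i => w i (e (u, v) i))]
      apply Finset.prod_congr rfl
      intro i _
      rw [happ, dif_pos i.2]
    · rw [Finset.prod_subtype Tᶜ (fun i => Finset.mem_compl) (fun i => w i (e (u, v) i))]
      apply Finset.prod_congr rfl
      intro i _
      rw [happ, dif_neg i.2]
  set v₀ : ∀ i : {i // i ∉ T}, β i := fun i => Classical.arbitrary _ with hv₀
  set u₀ : ∀ i : {i // i ∈ T}, β i := fun i => Classical.arbitrary _ with hu₀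
  have hFe : ∀ u v, F (e (u, v)) = F (e (u, v₀)) := by
    intro u v
    apply hF
    intro i hi
    rw [happ, happ, dif_pos hi, dif_pos hi]
  have hGe : ∀ u v, G (e (u, v)) = G (e (u₀, v)) := by
    intro u v
    apply hG
    intro i hi
    rw [happ, happ, dif_neg hi, dif_neg hi]
  have hQ : (∑ v : ∀ i : {i // i ∉ T}, β i, ∏ i : {i // i ∉ T}, w i (v i)) = 1 :=
    total_mass _ _ (fun i => hw1 i)
  have hP : (∑ u : ∀ i : {i // i ∈ T}, β i, ∏ i : {i // i ∈ T}, w i (u i)) = 1 :=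
    total_mass _ _ (fun i => hw1 i)
  have e1 := hsum (fun x => F x * G x * ∏ i, w i (x i))
  have e2 := hsum (fun x => F x * ∏ i, w i (x i))
  have e3 := hsum (fun x => G x * ∏ i, w i (x i))
  simp only [hw] at e1 e2 e3
  have E1 : (∑ x : ∀ i, β i, F x * G x * ∏ i, w i (x i))
      = (∑ u : ∀ i : {i // i ∈ T}, β i, F (e (u, v₀)) * ∏ i : {i // i ∈ T}, w i (u i))
        * (∑ v : ∀ i : {i // i ∉ T}, β i, G (e (u₀, v)) * ∏ i : {i // i ∉ T}, w i (v i)) := by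
    rw [e1, Finset.sum_mul_sum]
    apply Finset.sum_congr rfl; intro u _
    apply Finset.sum_congr rfl; intro v _
    rw [hFe u v, hGe u v]; ring
  have E2 : (∑ x : ∀ i, β i, F x * ∏ i, w i (x i))
      = (∑ u : ∀ i : {i // i ∈ T}, β i, F (e (u, v₀)) * ∏ i : {i // i ∈ T}, w i (u i)) := by
    rw [e2]
    apply Finset.sum_congr rfl; intro u _
    calc (∑ v : ∀ i : {i // i ∉ T}, β i,
            F (e (u, v)) * ((∏ i : {i // i ∈ T}, w i (u i)) * ∏ i : {i // i ∉ T}, w i (v i)))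
        = (F (e (u, v₀)) * ∏ i : {i // i ∈ T}, w i (u i))
            * ∑ v : ∀ i : {i // i ∉ T}, β i, ∏ i : {i // i ∉ T}, w i (v i) := by
          rw [Finset.mul_sum]
          apply Finset.sum_congr rfl; intro v _
          rw [hFe u v]; ring
      _ = _ := by rw [hQ, mul_one]
  have E3 : (∑ x : ∀ i, β i, G x * ∏ i, w i (x i))
      = (∑ v : ∀ i : {i // i ∉ T}, β i, G (e (u₀, v)) * ∏ i : {i // i ∉ T}, w i (v i)) := by
    rw [e3, Finset.sum_comm]
    apply Finset.sum_congr rfl; intro v _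
    calc (∑ u : ∀ i : {i // i ∈ T}, β i,
            G (e (u, v)) * ((∏ i : {i // i ∈ T}, w i (u i)) * ∏ i : {i // i ∉ T}, w i (v i)))
        = (G (e (u₀, v)) * ∏ i : {i // i ∉ T}, w i (v i))
            * ∑ u : ∀ i : {i // i ∈ T}, β i, ∏ i : {i // i ∈ T}, w i (u i) := by
          rw [Finset.mul_sum]
          apply Finset.sum_congr rfl; intro u _
          rw [hGe u v]; ring
      _ = _ := by rw [hP, mul_one]
  rw [E1, E2, E3]

open Finset Classical in
lemma factor_lemma {n m : ℕ} (α : Fin n → Type*) [∀ i, Fintype (α i)]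
    (w : ∀ i, α i → ℝ) (hw1 : ∀ i, ∑ a, w i a = 1)
    (Scp : Fin m → Finset (Fin n)) (φ : Fin m → (∀ i, α i) → Prop)
    (hdep : ∀ k x y, (∀ i ∈ Scp k, x i = y i) → (φ k x ↔ φ k y))
    (I : Finset (Fin m))
    (hI : ∀ k ∈ I, ∀ ℓ ∈ I, k ≠ ℓ → ¬ (Scp k ∩ Scp ℓ).Nonempty) :
    ∏ k ∈ I, (∑ x : ∀ i, α i, (if ¬ φ k x then 1 else 0) * ∏ i, w i (x i))
      = ∑ x : ∀ i, α i, (if ∀ k ∈ I, ¬ φ k x then 1 else 0) * ∏ i, w i (x i) := by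
  revert hI
  induction I using Finset.induction_on with
  | empty =>
    intro _
    simp only [Finset.prod_empty, Finset.notMem_empty]
    simp only [false_implies, implies_true, if_true, one_mul]
    exact (total_mass α w hw1).symm
  | @insert a I ha ih =>
    intro hins
    have hI' : ∀ k ∈ I, ∀ ℓ ∈ I, k ≠ ℓ → ¬ (Scp k ∩ Scp ℓ).Nonempty := by
      intro k hk ℓ hℓ hkl
      exact hins k (Finset.mem_insert_of_mem hk) ℓ (Finset.mem_insert_of_mem hℓ) hkl
    rw [Finset.prod_insert ha, ih hI']
    have key := split_lemma α w hw1 (Scp a)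
      (fun x => if ¬ φ a x then 1 else 0)
      (fun x => if ∀ k ∈ I, ¬ φ k x then 1 else 0)
      (by
        intro x y hxy
        congr 1
        simp only [eq_iff_iff]
        exact not_congr (hdep a x y hxy))
      (by
        intro x y hxy
        congr 1
        simp only [eq_iff_iff]
        constructor
        · intro h k hk hky
          exact h k hk ((hdep k x y (fun i hi => hxy i (fun hia =>
              hins a (Finset.mem_insert_self a I) k (Finset.mem_insert_of_mem hk)
                (fun hak => ha (hak ▸ hk)) ⟨i, Finset.mem_inter.2 ⟨hia, hi⟩⟩))).2 hky)
        · intro h k hk hkx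
          exact h k hk ((hdep k x y (fun i hi => hxy i (fun hia =>
              hins a (Finset.mem_insert_self a I) k (Finset.mem_insert_of_mem hk)
                (fun hak => ha (hak ▸ hk)) ⟨i, Finset.mem_inter.2 ⟨hia, hi⟩⟩))).1 hkx))
    rw [← key]
    apply Finset.sum_congr rfl
    intro x _
    congr 1
    by_cases h1 : φ a x <;> by_cases h2 : ∀ k ∈ I, ¬ φ k x <;>
      simp [h1, h2, Finset.forall_mem_insert]


open Finset Classical in
/-- For an extremal instance `Φ = φ_1 ∧ ⋯ ∧ φ_m` over a product distribution,
with `p_k = Pr(¬φ_k)`, the quantity `q_S = Σ_{I ∈ I(Γ), I ⊇ S} (−1)^{|I∖S|} p_I`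
equals the probability that exactly the clauses in `S` are false. -/
theorem stmt_4 {n m : ℕ} (α : Fin n → Type*) [∀ i, Fintype (α i)]
    (w : ∀ i, α i → ℝ) (hw0 : ∀ i a, 0 ≤ w i a) (hw1 : ∀ i, ∑ a, w i a = 1)
    (Scp : Fin m → Finset (Fin n)) (φ : Fin m → (∀ i, α i) → Prop)
    (hdep : ∀ k x y, (∀ i ∈ Scp k, x i = y i) → (φ k x ↔ φ k y))
    (hext : ∀ k ℓ, k ≠ ℓ → (Scp k ∩ Scp ℓ).Nonempty → ∀ x, φ k x ∨ φ ℓ x)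
    (S : Finset (Fin m)) :
    ∑ I ∈ univ.filter (fun I : Finset (Fin m) =>
        (∀ k ∈ I, ∀ ℓ ∈ I, k ≠ ℓ → ¬ (Scp k ∩ Scp ℓ).Nonempty) ∧ S ⊆ I),
      (-1 : ℝ) ^ (I \ S).card *
        ∏ k ∈ I, ∑ x ∈ univ.filter (fun x : ∀ i, α i => ¬ φ k x), ∏ i, w i (x i)
    = ∑ x ∈ univ.filter
          (fun x : ∀ i, α i => (∀ k ∈ S, ¬ φ k x) ∧ ∀ k ∈ Sᶜ, φ k x),
        ∏ i, w i (x i) := by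
  classical
  -- rewrite clause probabilities as indicator sums
  have hp : ∀ k, (∑ x ∈ univ.filter (fun x : ∀ i, α i => ¬ φ k x), ∏ i, w i (x i))
      = ∑ x : ∀ i, α i, (if ¬ φ k x then 1 else 0) * ∏ i, w i (x i) := by
    intro k
    rw [Finset.sum_filter]
    apply Finset.sum_congr rfl
    intro x _
    rw [ite_mul, one_mul, zero_mul]
  -- step 1: use factorization on each independent I
  have step1 : ∑ I ∈ univ.filter (fun I : Finset (Fin m) =>
        (∀ k ∈ I, ∀ ℓ ∈ I, k ≠ ℓ → ¬ (Scp k ∩ Scp ℓ).Nonempty) ∧ S ⊆ I),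
      (-1 : ℝ) ^ (I \ S).card *
        ∏ k ∈ I, ∑ x ∈ univ.filter (fun x : ∀ i, α i => ¬ φ k x), ∏ i, w i (x i)
    = ∑ I ∈ univ.filter (fun I : Finset (Fin m) =>
        (∀ k ∈ I, ∀ ℓ ∈ I, k ≠ ℓ → ¬ (Scp k ∩ Scp ℓ).Nonempty) ∧ S ⊆ I),
      ∑ x : ∀ i, α i,
        ((-1 : ℝ) ^ (I \ S).card * (if ∀ k ∈ I, ¬ φ k x then 1 else 0)) * ∏ i, w i (x i) := by
    apply Finset.sum_congr rfl
    intro I hI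
    rw [Finset.mem_filter] at hI
    simp only [hp]
    rw [factor_lemma α w hw1 Scp φ hdep I hI.2.1, Finset.mul_sum]
    apply Finset.sum_congr rfl
    intro x _
    ring
  rw [step1, Finset.sum_comm]
  rw [Finset.sum_filter]
  apply Finset.sum_congr rfl
  intro x _
  rw [← Finset.sum_mul]
  -- pointwise combinatorial identity
  set Fx : Finset (Fin m) := univ.filter (fun k => ¬ φ k x) with hFx
  have hmem : ∀ k, k ∈ Fx ↔ ¬ φ k x := by intro k; simp [hFx]
  have hsubiff : ∀ I : Finset (Fin m), (∀ k ∈ I, ¬ φ k x) ↔ I ⊆ Fx := by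
    intro I
    constructor
    · intro h k hk; exact (hmem k).2 (h k hk)
    · intro h k hk; exact (hmem k).1 (h hk)
  have hindep : ∀ I : Finset (Fin m), I ⊆ Fx →
      (∀ k ∈ I, ∀ ℓ ∈ I, k ≠ ℓ → ¬ (Scp k ∩ Scp ℓ).Nonempty) := by
    intro I hIF k hk ℓ hℓ hkl hnon
    rcases hext k ℓ hkl hnon x with h | h
    · exact (hmem k).1 (hIF hk) h
    · exact (hmem ℓ).1 (hIF hℓ) h
  have key : (∑ I ∈ univ.filter (fun I : Finset (Fin m) =>
        (∀ k ∈ I, ∀ ℓ ∈ I, k ≠ ℓ → ¬ (Scp k ∩ Scp ℓ).Nonempty) ∧ S ⊆ I),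
        (-1 : ℝ) ^ (I \ S).card * (if ∀ k ∈ I, ¬ φ k x then 1 else 0))
      = if (∀ k ∈ S, ¬ φ k x) ∧ ∀ k ∈ Sᶜ, φ k x then 1 else 0 := by
    have hA : (∑ I ∈ univ.filter (fun I : Finset (Fin m) =>
          (∀ k ∈ I, ∀ ℓ ∈ I, k ≠ ℓ → ¬ (Scp k ∩ Scp ℓ).Nonempty) ∧ S ⊆ I),
          (-1 : ℝ) ^ (I \ S).card * (if ∀ k ∈ I, ¬ φ k x then 1 else 0))
        = ∑ I ∈ univ.filter (fun I : Finset (Fin m) => S ⊆ I ∧ I ⊆ Fx),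
          (-1 : ℝ) ^ (I \ S).card := by
      rw [Finset.sum_filter, Finset.sum_filter]
      apply Finset.sum_congr rfl
      intro I _
      by_cases h1 : I ⊆ Fx
      · by_cases h2 : S ⊆ I
        · rw [if_pos ⟨hindep I h1, h2⟩, if_pos ((hsubiff I).2 h1), if_pos ⟨h2, h1⟩, mul_one]
        · rw [if_neg (fun h => h2 h.2), if_neg (fun h => h2 h.1)]
      · by_cases h3 : (∀ k ∈ I, ∀ ℓ ∈ I, k ≠ ℓ → ¬ (Scp k ∩ Scp ℓ).Nonempty) ∧ S ⊆ I
        · rw [if_pos h3, if_neg (fun h => h1 ((hsubiff I).1 h)), mul_zero,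
            if_neg (fun h => h1 h.2)]
        · rw [if_neg h3, if_neg (fun h => h1 h.2)]
    rw [hA]
    have hScond : (∀ k ∈ S, ¬ φ k x) ↔ S ⊆ Fx := hsubiff S
    have hCcond : (∀ k ∈ Sᶜ, φ k x) ↔ Fx ⊆ S := by
      constructor
      · intro h k hk
        by_contra hks
        exact (hmem k).1 hk (h k (Finset.mem_compl.2 hks))
      · intro h k hk
        by_contra hφ
        exact Finset.mem_compl.1 hk (h ((hmem k).2 hφ))
    by_cases hSF : S ⊆ Fx
    · have hbij : (∑ I ∈ univ.filter (fun I : Finset (Fin m) => S ⊆ I ∧ I ⊆ Fx),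
            (-1 : ℝ) ^ (I \ S).card)
          = ∑ J ∈ (Fx \ S).powerset, (-1 : ℝ) ^ J.card := by
        apply Finset.sum_nbij' (fun I => I \ S) (fun J => S ∪ J)
        · intro I hI
          rw [Finset.mem_filter] at hI
          rw [Finset.mem_powerset]
          exact Finset.sdiff_subset_sdiff hI.2.2 (le_refl S)
        · intro J hJ
          rw [Finset.mem_powerset] at hJ
          rw [Finset.mem_filter]
          refine ⟨Finset.mem_univ _, Finset.subset_union_left, ?_⟩
          exact Finset.union_subset hSF (hJ.trans (Finset.sdiff_subset))
        · intro I hI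
          rw [Finset.mem_filter] at hI
          exact Finset.union_sdiff_of_subset hI.2.1
        · intro J hJ
          rw [Finset.mem_powerset] at hJ
          refine Finset.union_sdiff_cancel_left ?_
          exact Finset.disjoint_left.2 (fun a haS haJ => (Finset.mem_sdiff.1 (hJ haJ)).2 haS)
        · intro I _; rfl
      rw [hbij]
      have hz : (∑ J ∈ (Fx \ S).powerset, (-1 : ℝ) ^ J.card)
          = ((∑ J ∈ (Fx \ S).powerset, (-1 : ℤ) ^ J.card : ℤ) : ℝ) := by
        push_cast
        rfl
      rw [hz, Finset.sum_powerset_neg_one_pow_card]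
      by_cases hFS : Fx ⊆ S
      · rw [if_pos (Finset.sdiff_eq_empty_iff_subset.2 hFS),
          if_pos ⟨hScond.2 hSF, hCcond.2 hFS⟩]
        norm_num
      · rw [if_neg (fun h => hFS (Finset.sdiff_eq_empty_iff_subset.1 h)),
          if_neg (fun h => hFS (hCcond.1 h.2))]
        norm_num
    · rw [Finset.sum_eq_zero, if_neg (fun h => hSF (hScond.1 h.1))]
      intro I hI
      rw [Finset.mem_filter] at hI
      exact absurd (hI.2.1.trans hI.2.2) hSF
  rw [key]
  by_cases h : (∀ k ∈ S, ¬ φ k x) ∧ ∀ k ∈ Sᶜ, φ k x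
  · rw [if_pos h, if_pos h, one_mul]
  · rw [if_neg h, if_neg h, zero_mul]
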